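/- Let Ω ⊂ ℝ^d be a bounded open set, let u ∈ L^∞(Ω;ℝ^m), let U ⊆ Ω be open, and let ε, r > 0. Then H_ε^r(u,U) ≤ (1 + 2‖u‖_{L^∞(Ω;ℝ^m)}) G_ε^r(u,U) + (|U| |B_r| G_ε^r(u,U))^{1/2}. -/

import Mathlib

open MeasureTheory Filter Metric Set
open scoped ENNReal Topology

noncomputable section

/-- `ℝ^n` with the Euclidean norm. -/
abbrev Eu (n : ℕ) : Type := EuclideanSpace ℝ (Fin n)

/-- `g_ε(z) := min{|z|², 1/ε}`. -/
def gE {m : ℕ} (ε : ℝ) (z : Eu m) : ℝ := min (‖z‖ ^ 2) (1 / ε)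

/-- `E_ε(ξ) := {x ∈ E : x + εξ ∈ E}`. -/
def shiftSet {d : ℕ} (E : Set (Eu d)) (ε : ℝ) (ξ : Eu d) : Set (Eu d) :=
  {x ∈ E | x + ε • ξ ∈ E}
/-- `G_ε^r(u,U) := ∫_{B_r} ∫_{U_ε(ξ)} g_ε((u(x+εξ)-u(x))/ε) dx dξ`. -/
def Gfun {d m : ℕ} (ε r : ℝ) (u : Eu d → Eu m) (U : Set (Eu d)) : ℝ≥0∞ :=
  ∫⁻ ξ in Metric.ball (0 : Eu d) r, ∫⁻ x in shiftSet U ε ξ,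
    ENNReal.ofReal (gE ε (ε⁻¹ • (u (x + ε • ξ) - u x)))

/-- `P_ε^r(u,U) := ∫_{B_r} ∫_{U_ε(ξ)} |u(x+εξ)-u(x)|/ε dx dξ`. -/
def Pfun {d m : ℕ} (ε r : ℝ) (u : Eu d → Eu m) (U : Set (Eu d)) : ℝ≥0∞ :=
  ∫⁻ ξ in Metric.ball (0 : Eu d) r, ∫⁻ x in shiftSet U ε ξ,
    ENNReal.ofReal (‖u (x + ε • ξ) - u x‖ / ε)

/-- `H_ε^r(u,U) := G_ε^r(u,U) + P_ε^r(u,U)`. -/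
def Hfun {d m : ℕ} (ε r : ℝ) (u : Eu d → Eu m) (U : Set (Eu d)) : ℝ≥0∞ :=
  Gfun ε r u U + Pfun ε r u U

/-- Cauchy–Schwarz for lintegrals: `∫ f^(1/2) ≤ μ(univ)^(1/2) (∫ f)^(1/2)`. -/
lemma cs_aux {α : Type*} [MeasurableSpace α] (μ : Measure α) (f : α → ℝ≥0∞)
    (hf : AEMeasurable f μ) :
    ∫⁻ a, f a ^ (1/2 : ℝ) ∂μ ≤ (μ Set.univ) ^ (1/2:ℝ) * (∫⁻ a, f a ∂μ) ^ (1/2:ℝ) := by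
  have hconj : Real.HolderConjugate 2 2 := ⟨by norm_num, by norm_num, by norm_num⟩
  have h := ENNReal.lintegral_mul_le_Lp_mul_Lq μ hconj
    (f := fun a => f a ^ (1/2:ℝ)) (g := fun _ => 1) (hf.pow_const _) aemeasurable_const
  simp only [Pi.mul_apply, mul_one, one_pow] at h
  calc ∫⁻ a, f a ^ (1/2:ℝ) ∂μ
      ≤ (∫⁻ a, (f a ^ (1/2:ℝ)) ^ (2:ℝ) ∂μ) ^ (1/2:ℝ) * (∫⁻ _, (1:ℝ≥0∞) ∂μ) ^ (1/2:ℝ) := by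
        convert h using 4 <;> simp [ENNReal.rpow_natCast]
    _ = (μ Set.univ) ^ (1/2:ℝ) * (∫⁻ a, f a ∂μ) ^ (1/2:ℝ) := by
        rw [mul_comm, lintegral_one]
        congr 2
        refine lintegral_congr fun a => ?_
        rw [← ENNReal.rpow_mul]
        norm_num

/-- Translation invariance of a.e. properties. -/
lemma ae_translate {d : ℕ} {P : Eu d → Prop} (h : ∀ᵐ x, P x) (c : Eu d) :
    ∀ᵐ x, P (x + c) := by
  rw [ae_iff] at h ⊢
  have : {x | ¬ P (x + c)} = (fun x => x + c) ⁻¹' {x | ¬ P x} := rfl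
  rw [this, measure_preimage_add_right]
  exact h

set_option maxHeartbeats 1000000 in
/-- Interpolation estimate: for `u ∈ L^∞(Ω;ℝ^m)`, `U ⊆ Ω` open and `ε, r > 0`,
`H_ε^r(u,U) ≤ (1 + 2‖u‖_{L^∞(Ω)}) G_ε^r(u,U) + (|U| |B_r| G_ε^r(u,U))^{1/2}`. -/
theorem statement7 {d m : ℕ} [NeZero d] [NeZero m]
    (Ω : Set (Eu d)) (hΩo : IsOpen Ω) (hΩb : Bornology.IsBounded Ω)
    (u : Eu d → Eu m) (hu : Measurable u)
    (huinf : eLpNorm u ⊤ (volume.restrict Ω) < ⊤)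
    (U : Set (Eu d)) (hUo : IsOpen U) (hUΩ : U ⊆ Ω)
    (ε r : ℝ) (hε : 0 < ε) (hr : 0 < r) :
    Hfun ε r u U ≤
      (1 + 2 * eLpNorm u ⊤ (volume.restrict Ω)) * Gfun ε r u U +
        (volume U * volume (Metric.ball (0 : Eu d) r) * Gfun ε r u U) ^ (1 / 2 : ℝ) := by
  classical
  set M := eLpNorm u ⊤ (volume.restrict Ω) with hMdef
  have hMlt : M < ⊤ := huinf
  set Mr := M.toReal with hMrdef
  have hMr0 : 0 ≤ Mr := ENNReal.toReal_nonneg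
  have hΩm : MeasurableSet Ω := hΩo.measurableSet
  -- measurability of the shift sets
  have hSopen : ∀ ξ : Eu d, IsOpen (shiftSet U ε ξ) := fun ξ => by
    have : shiftSet U ε ξ = U ∩ ((fun x => x + ε • ξ) ⁻¹' U) := rfl
    rw [this]
    exact hUo.inter (hUo.preimage (continuous_id.add continuous_const))
  have hSm : ∀ ξ, MeasurableSet (shiftSet U ε ξ) := fun ξ => (hSopen ξ).measurableSet
  set g2 : Eu d → Eu d → ℝ≥0∞ :=
    fun ξ x => ENNReal.ofReal (gE ε (ε⁻¹ • (u (x + ε • ξ) - u x))) with hg2def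
  -- joint measurability
  have h2 : Continuous fun z : Eu m => gE ε z := by
    simp only [gE]
    exact (continuous_norm.pow 2).min continuous_const
  have hjm : Measurable fun p : Eu d × Eu d => g2 p.1 p.2 := by
    apply Measurable.ennreal_ofReal
    have h1 : Measurable fun p : Eu d × Eu d => u (p.2 + ε • p.1) - u p.2 :=
      (hu.comp (measurable_snd.add (measurable_fst.const_smul ε))).sub (hu.comp measurable_snd)
    exact h2.measurable.comp (h1.const_smul ε⁻¹)
  have hgξ : ∀ ξ : Eu d, Measurable fun x => g2 ξ x := by
    intro ξ
    apply Measurable.ennreal_ofReal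
    have h1 : Measurable fun x : Eu d => u (x + ε • ξ) - u x :=
      (hu.comp (measurable_id.add_const _)).sub hu
    exact h2.measurable.comp (h1.const_smul ε⁻¹)
  have hT : MeasurableSet {p : Eu d × Eu d | p.2 ∈ shiftSet U ε p.1} := by
    have h : {p : Eu d × Eu d | p.2 ∈ shiftSet U ε p.1}
        = (Prod.snd ⁻¹' U) ∩ ((fun p : Eu d × Eu d => p.2 + ε • p.1) ⁻¹' U) := rfl
    rw [h]
    exact ((hUo.preimage continuous_snd).inter
      (hUo.preimage (continuous_snd.add (continuous_fst.const_smul ε)))).measurableSet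
  have hmeasInt : ∀ F : Eu d → Eu d → ℝ≥0∞, Measurable (fun p : Eu d × Eu d => F p.1 p.2) →
      Measurable fun ξ => ∫⁻ x in shiftSet U ε ξ, F ξ x := by
    intro F hF
    have heq : ∀ ξ, ∫⁻ x in shiftSet U ε ξ, F ξ x
        = ∫⁻ x, ({p : Eu d × Eu d | p.2 ∈ shiftSet U ε p.1}.indicator
            (fun p => F p.1 p.2)) (ξ, x) := by
      intro ξ
      rw [← lintegral_indicator (hSm ξ)]
      refine lintegral_congr fun x => ?_
      simp only [Set.indicator_apply, Set.mem_setOf_eq]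
    simp_rw [heq]
    exact (hF.indicator hT).lintegral_prod_right'
  set I : Eu d → ℝ≥0∞ := fun ξ => ∫⁻ x in shiftSet U ε ξ, g2 ξ x with hIdef
  set J : Eu d → ℝ≥0∞ := fun ξ => ∫⁻ x in shiftSet U ε ξ, (g2 ξ x) ^ (1/2:ℝ) with hJdef
  have hImeas : Measurable I := hmeasInt _ hjm
  have hJmeas : Measurable J := hmeasInt _ (hjm.pow_const _)
  have hGI : Gfun ε r u U = ∫⁻ ξ in Metric.ball (0:Eu d) r, I ξ := rfl
  -- a.e. bound by the essential supremum
  have hae : ∀ᵐ x ∂volume, x ∈ Ω → ‖u x‖ ≤ Mr := by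
    have h1 : ∀ᵐ x ∂(volume.restrict Ω), (‖u x‖₊ : ℝ≥0∞) ≤ M := by
      rw [hMdef, eLpNorm_exponent_top, eLpNormEssSup]
      exact ae_le_essSup
    rw [ae_restrict_iff' hΩm] at h1
    filter_upwards [h1] with x hx hxΩ
    have h2 := ENNReal.toReal_mono hMlt.ne (hx hxΩ)
    simpa using h2
  have hMM : ENNReal.ofReal (2 * Mr) = 2 * M := by
    rw [ENNReal.ofReal_mul (by norm_num), ENNReal.ofReal_ofNat, ENNReal.ofReal_toReal hMlt.ne]
  clear_value Mr
  clear_value M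
  -- pointwise interpolation bound
  have hpt : ∀ w z : Eu m, ‖z‖ ≤ Mr → ‖w‖ ≤ Mr →
      ENNReal.ofReal (‖w - z‖ / ε) ≤
        2 * M * ENNReal.ofReal (gE ε (ε⁻¹ • (w - z))) +
          (ENNReal.ofReal (gE ε (ε⁻¹ • (w - z)))) ^ (1/2:ℝ) := by
    intro w z hz hw
    set t := ‖w - z‖ / ε with ht
    have ht0 : 0 ≤ t := div_nonneg (norm_nonneg _) hε.le
    have hnv : ‖ε⁻¹ • (w - z)‖ = t := by
      rw [norm_smul, Real.norm_eq_abs, abs_inv, abs_of_pos hε, ht, div_eq_inv_mul]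
    rw [gE, hnv]
    rcases le_or_gt (t^2) (1/ε) with hc | hc
    · rw [min_eq_left hc]
      have hsq : (ENNReal.ofReal (t^2)) ^ (1/2:ℝ) = ENNReal.ofReal t := by
        rw [ENNReal.ofReal_rpow_of_nonneg (by positivity) (by norm_num)]
        congr 1
        rw [← Real.rpow_natCast t 2, ← Real.rpow_mul ht0]
        norm_num
      rw [hsq]
      exact le_add_self
    · rw [min_eq_right hc.le]
      have htle : t ≤ 2 * Mr * (1/ε) := by
        have h1 : ‖w - z‖ ≤ 2 * Mr := by
          calc ‖w - z‖ ≤ ‖w‖ + ‖z‖ := norm_sub_le _ _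
            _ ≤ 2 * Mr := by linarith
        rw [ht, mul_one_div]
        gcongr
      calc ENNReal.ofReal t ≤ ENNReal.ofReal (2 * Mr * (1/ε)) := ENNReal.ofReal_le_ofReal htle
        _ = 2 * M * ENNReal.ofReal (1/ε) := by
            rw [ENNReal.ofReal_mul (by positivity), hMM]
        _ ≤ _ := le_self_add
  -- Step A: bound on the inner integral of P
  have stepA : ∀ ξ : Eu d,
      (∫⁻ x in shiftSet U ε ξ, ENNReal.ofReal (‖u (x + ε • ξ) - u x‖ / ε))
        ≤ 2 * M * I ξ + J ξ := by
    intro ξ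
    have hb : ∀ᵐ x ∂(volume.restrict (shiftSet U ε ξ)),
        ENNReal.ofReal (‖u (x + ε • ξ) - u x‖ / ε)
          ≤ 2 * M * g2 ξ x + (g2 ξ x) ^ (1/2:ℝ) := by
      have h1 : ∀ᵐ x ∂volume, x + ε • ξ ∈ Ω → ‖u (x + ε • ξ)‖ ≤ Mr := ae_translate hae (ε • ξ)
      filter_upwards [ae_restrict_of_ae hae, ae_restrict_of_ae h1,
        ae_restrict_mem (hSm ξ)] with x hx1 hx2 hxS
      exact hpt _ _ (hx1 (hUΩ hxS.1)) (hx2 (hUΩ hxS.2))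
    calc (∫⁻ x in shiftSet U ε ξ, ENNReal.ofReal (‖u (x + ε • ξ) - u x‖ / ε))
        ≤ ∫⁻ x in shiftSet U ε ξ, (2 * M * g2 ξ x + (g2 ξ x) ^ (1/2:ℝ)) :=
          lintegral_mono_ae hb
      _ = 2 * M * I ξ + J ξ := by
          rw [lintegral_add_left ((hgξ ξ).const_mul _), lintegral_const_mul _ (hgξ ξ)]
  -- Step B: bound on P
  have hPle : Pfun ε r u U ≤ 2 * M * Gfun ε r u U + ∫⁻ ξ in Metric.ball (0:Eu d) r, J ξ := by
    calc Pfun ε r u U ≤ ∫⁻ ξ in Metric.ball (0:Eu d) r, (2 * M * I ξ + J ξ) :=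
        lintegral_mono stepA
      _ = _ := by
        rw [lintegral_add_left (hImeas.const_mul _), lintegral_const_mul _ hImeas, hGI]
  -- Step C+D: Cauchy–Schwarz
  have hCS : (∫⁻ ξ in Metric.ball (0:Eu d) r, J ξ)
      ≤ (volume U * volume (Metric.ball (0:Eu d) r) * Gfun ε r u U) ^ (1/2:ℝ) := by
    have hJle : ∀ ξ, J ξ ≤ (volume U) ^ (1/2:ℝ) * (I ξ) ^ (1/2:ℝ) := by
      intro ξ
      refine (cs_aux (volume.restrict (shiftSet U ε ξ)) (fun x => g2 ξ x)
        (hgξ ξ).aemeasurable).trans ?_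
      refine mul_le_mul' (ENNReal.rpow_le_rpow ?_ (by norm_num)) le_rfl
      rw [Measure.restrict_apply MeasurableSet.univ, Set.univ_inter]
      exact measure_mono fun x hx => hx.1
    calc (∫⁻ ξ in Metric.ball (0:Eu d) r, J ξ)
        ≤ ∫⁻ ξ in Metric.ball (0:Eu d) r, (volume U) ^ (1/2:ℝ) * (I ξ) ^ (1/2:ℝ) :=
          lintegral_mono hJle
      _ = (volume U) ^ (1/2:ℝ) * ∫⁻ ξ in Metric.ball (0:Eu d) r, (I ξ) ^ (1/2:ℝ) :=
          lintegral_const_mul _ (hImeas.pow_const _)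
      _ ≤ (volume U) ^ (1/2:ℝ) *
          ((volume (Metric.ball (0:Eu d) r)) ^ (1/2:ℝ) * (Gfun ε r u U) ^ (1/2:ℝ)) := by
          refine mul_le_mul' le_rfl ?_
          have h := cs_aux (volume.restrict (Metric.ball (0:Eu d) r)) I hImeas.aemeasurable
          rw [Measure.restrict_apply MeasurableSet.univ, Set.univ_inter] at h
          rw [hGI]
          exact h
      _ = _ := by
          rw [ENNReal.mul_rpow_of_nonneg _ _ (by norm_num : (0:ℝ) ≤ 1/2),
            ENNReal.mul_rpow_of_nonneg _ _ (by norm_num : (0:ℝ) ≤ 1/2), mul_assoc]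
  -- conclusion
  calc Hfun ε r u U = Gfun ε r u U + Pfun ε r u U := rfl
    _ ≤ Gfun ε r u U + (2 * M * Gfun ε r u U + ∫⁻ ξ in Metric.ball (0:Eu d) r, J ξ) :=
        add_le_add_right hPle _
    _ ≤ Gfun ε r u U + (2 * M * Gfun ε r u U +
        (volume U * volume (Metric.ball (0:Eu d) r) * Gfun ε r u U) ^ (1/2:ℝ)) :=
        add_le_add_right (add_le_add_right hCS _) _
    _ = (1 + 2 * M) * Gfun ε r u U +
        (volume U * volume (Metric.ball (0:Eu d) r) * Gfun ε r u U) ^ (1/2:ℝ) := by ring
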